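/- Let z_1, z_2, …, z_n ∈ ℂ and H > 0. Then there exist an integer l with 1 ≤ l ≤ n, points u_1, …, u_l ∈ ℂ and radii s_1, …, s_l > 0 with Σ_{k=1}^{l} s_k² ≤ 4H², such that Σ_{k=1}^{n} 1/|z − z_k| ≤ 2n/H for every z ∈ ℂ that lies outside ∪_{k=1}^{l} D(u_k, s_k). -/

import Mathlib

/-!
Let `λ_p = H √(p/n)`. Greedily take the largest `p` for which some disk of radius `λ_p` contains
at least `p` of the remaining points, remove those points and keep the concentric disk of radius
`2λ_p`. The chosen `p` add up to at most `n`, whence `Σ (2λ_p)² ≤ 4H²`. Outside the kept disks,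
for every `p` fewer than `p` points lie within `λ_p`: points removed at a step with `p' ≥ p` are
`λ_{p'}`-far by the triangle inequality, and the others are controlled by maximality of `p'`.
So the `p`-th nearest point is at distance `≥ λ_p`, and
`Σ 1/|w - z_k| ≤ Σ_p 1/λ_p = (√n/H) Σ_p p^{-1/2} ≤ 2n/H`.
-/

open Metric Set
open scoped Finset

lemma sum_range_inv_sqrt_succ_le (n : ℕ) :
    ∑ p ∈ Finset.range n, 1 / √(p + 1) ≤ 2 * √n := by
  induction n with
  | zero => simp
  | succ m ih =>
    have hpos : 0 < √((m : ℝ) + 1) := by positivity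
    have hsq : √((m : ℝ) + 1) ^ 2 = m + 1 := Real.sq_sqrt (by positivity)
    have hsq' : √(m : ℝ) ^ 2 = m := Real.sq_sqrt (by positivity)
    have telescoping : 1 / √((m : ℝ) + 1) ≤ 2 * √((m : ℝ) + 1) - 2 * √m := by
      rw [div_le_iff₀ hpos]
      nlinarith [sq_nonneg (√((m : ℝ) + 1) - √m)]
    rw [Finset.sum_range_succ]
    push_cast
    linarith

lemma sum_one_div_le_of_card_lt {n : ℕ} (d : Fin n → ℝ) (μ : ℕ → ℝ)
    (hμ : ∀ p, 1 ≤ p → 0 < μ p) (hcard : ∀ p, 1 ≤ p → #{k | d k < μ p} < p) :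
    ∑ k, 1 / d k ≤ ∑ p ∈ Finset.range n, 1 / μ (p + 1) := by
  set σ := Tuple.sort d
  rw [← Equiv.sum_comp σ, ← Fin.sum_univ_eq_sum_range]
  refine Finset.sum_le_sum fun p _ => one_div_le_one_div_of_le (hμ _ p.succ_pos) ?_
  -- otherwise the `p + 1` smallest values `d (σ 0) ≤ ⋯ ≤ d (σ p)` all lie below `μ (p + 1)`
  by_contra! hlt
  have hsub : (Finset.Iic p).image σ ⊆ Finset.univ.filter (d · < μ (p + 1)) := by
    intro k hk
    obtain ⟨q, hq, rfl⟩ := Finset.mem_image.1 hk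
    exact Finset.mem_filter.2
      ⟨Finset.mem_univ _, (Tuple.monotone_sort d (Finset.mem_Iic.1 hq)).trans_lt hlt⟩
  have := Finset.card_le_card hsub
  rw [Finset.card_image_of_injective _ σ.injective, Fin.card_Iic] at this
  exact (hcard _ p.succ_pos).not_ge this

section Greedy

variable {α ι : Type*} [PseudoMetricSpace α] (z : ι → α)

lemma exists_maximal_cluster (r : ℕ → ℝ) (S : Finset ι)
    (h : ∃ p, 1 ≤ p ∧ ∃ c, p ≤ #{k ∈ S | dist c (z k) < r p}) :
    ∃ p₁, 1 ≤ p₁ ∧ (∃ c₁, p₁ ≤ #{k ∈ S | dist c₁ (z k) < r p₁}) ∧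
      ∀ p, p₁ < p → ∀ c, #{k ∈ S | dist c (z k) < r p} < p := by
  classical
  obtain ⟨p, hp1, hp⟩ := h
  have le_card {q : ℕ} {c : α} (hq : q ≤ #{k ∈ S | dist c (z k) < r q}) : q ≤ #S :=
    hq.trans (Finset.card_filter_le _ _)
  have hpS : p ≤ #S := hp.elim fun _ => le_card
  set P : ℕ → Prop := fun q => ∃ c, q ≤ #{k ∈ S | dist c (z k) < r q}
  refine ⟨Nat.findGreatest P #S, hp1.trans (Nat.le_findGreatest hpS hp),
    Nat.findGreatest_spec (P := P) hpS hp, fun q hq c => ?_⟩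
  by_contra! hle
  exact Nat.findGreatest_is_greatest hq (le_card hle) ⟨c, hle⟩

lemma filter_dist_lt_eq_filter_sdiff [DecidableEq ι] {r₁ r₂ : ℝ} (hr : r₂ ≤ r₁) {w c : α}
    (hw : 2 * r₁ ≤ dist w c) (S : Finset ι) :
    {k ∈ S | dist w (z k) < r₂} = {k ∈ S \ {k ∈ S | dist c (z k) < r₁} | dist w (z k) < r₂} := by
  ext k
  simp only [Finset.mem_filter, Finset.mem_sdiff]
  refine ⟨fun ⟨hk, hwk⟩ => ⟨⟨hk, fun ⟨_, hck⟩ => ?_⟩, hwk⟩, fun ⟨⟨hk, _⟩, hwk⟩ => ⟨hk, hwk⟩⟩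
  linarith [dist_triangle_right w c (z k)]

theorem exists_balls_card_filter_lt {r : ℕ → ℝ} (hr : Monotone r) (S : Finset ι) :
    ∃ l, ∃ c : Fin l → α, ∃ m : Fin l → ℕ, (∀ j, 1 ≤ m j) ∧ ∑ j, m j ≤ #S ∧
      ∀ w, (∀ j, 2 * r (m j) ≤ dist w (c j)) →
        ∀ p, 1 ≤ p → #{k ∈ S | dist w (z k) < r p} < p := by
  classical
  induction S using Finset.strongInduction with
  | H S ih =>
  by_cases h : ∃ p, 1 ≤ p ∧ ∃ c, p ≤ #{k ∈ S | dist c (z k) < r p}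
  · obtain ⟨p₁, hp₁, ⟨c₁, hc₁⟩, hmax⟩ := exists_maximal_cluster z r S h
    set R := {k ∈ S | dist c₁ (z k) < r p₁}
    have hRS : R ⊆ S := Finset.filter_subset _ _
    obtain ⟨l, c, m, hm, hmS, hfar⟩ :=
      ih (S \ R) (Finset.sdiff_ssubset hRS (Finset.card_pos.1 (hp₁.trans hc₁)))
    refine ⟨l + 1, Fin.cons c₁ c, Fin.cons p₁ m, Fin.cases hp₁ hm, ?_, fun w hw p hp => ?_⟩
    · rw [Fin.sum_univ_succ]
      simp only [Fin.cons_zero, Fin.cons_succ]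
      have := Finset.card_sdiff_add_card_eq_card hRS
      omega
    · simp only [Fin.forall_fin_succ, Fin.cons_zero, Fin.cons_succ] at hw
      rcases le_or_gt p p₁ with hpp | hpp
      · rw [filter_dist_lt_eq_filter_sdiff z (hr hpp) hw.1]
        exact hfar w hw.2 p hp
      · exact hmax p hpp w
  · push Not at h
    exact ⟨0, Fin.elim0, Fin.elim0, Fin.rec0, by simp, fun w _ p hp => h p hp w⟩

end Greedy

section Radii

variable {H : ℝ} {n : ℕ}

lemma sum_sq_two_mul_mul_sqrt_div_le {l : ℕ} (m : Fin l → ℕ) (hm : ∑ j, m j ≤ n) :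
    ∑ j, (2 * (H * √(m j / n))) ^ 2 ≤ 4 * H ^ 2 := by
  have hterm : ∀ j, (2 * (H * √(m j / n))) ^ 2 = 4 * H ^ 2 * (m j / n) := fun j => by
    rw [mul_pow, mul_pow, Real.sq_sqrt (by positivity)]
    ring
  rw [Finset.sum_congr rfl fun j _ => hterm j, ← Finset.mul_sum, ← Finset.sum_div]
  refine mul_le_of_le_one_right (by positivity) (div_le_one_of_le₀ ?_ n.cast_nonneg)
  exact_mod_cast hm

lemma sum_range_one_div_mul_sqrt_div_le (hH : 0 < H) :
    ∑ p ∈ Finset.range n, 1 / (H * √((p + 1 : ℕ) / n)) ≤ 2 * n / H := by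
  have hterm : ∀ p : ℕ, 1 / (H * √((p + 1 : ℕ) / n)) = √n / H * (1 / √(p + 1)) := fun p => by
    rw [Real.sqrt_div' _ n.cast_nonneg]
    push_cast
    simp only [div_eq_mul_inv, mul_inv, inv_inv]
    ring
  calc ∑ p ∈ Finset.range n, 1 / (H * √((p + 1 : ℕ) / n))
      = √n / H * ∑ p ∈ Finset.range n, 1 / √(p + 1) := by
        rw [Finset.mul_sum]
        exact Finset.sum_congr rfl fun p _ => hterm p
    _ ≤ √n / H * (2 * √n) := by gcongr; exact sum_range_inv_sqrt_succ_le n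
    _ = 2 * n / H := by
        rw [div_mul_eq_mul_div, mul_left_comm, Real.mul_self_sqrt n.cast_nonneg]

end Radii

/-- The Fuchs–Macintyre lemma, part (i): given `z₁,…,zₙ ∈ ℂ` and `H > 0` there are at
most `n` exceptional disks `D(u_k, s_k)` with `Σ s_k² ≤ 4H²` outside of which
`Σ_{k=1}^n 1/|z − z_k| ≤ 2n/H`. -/
theorem fuchs_macintyre (n : ℕ) (hn : 0 < n) (z : Fin n → ℂ) (H : ℝ) (hH : 0 < H) :
    ∃ l : ℕ, 1 ≤ l ∧ l ≤ n ∧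
      ∃ u : Fin l → ℂ, ∃ s : Fin l → ℝ, (∀ k, 0 < s k) ∧
        (∑ k, (s k) ^ 2) ≤ 4 * H ^ 2 ∧
        ∀ w : ℂ, w ∉ (⋃ k, ball (u k) (s k)) →
          (∑ k, 1 / ‖w - z k‖) ≤ 2 * n / H := by
  set r : ℕ → ℝ := fun p => H * √(p / n)
  have hr : Monotone r := fun p q hpq => by dsimp only [r]; gcongr
  have hr_pos : ∀ p, 1 ≤ p → 0 < r p := fun p hp => by dsimp only [r]; positivity
  obtain ⟨l, c, m, hm, hmn, hfar⟩ := exists_balls_card_filter_lt z hr Finset.univ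
  rw [Finset.card_univ, Fintype.card_fin] at hmn
  have hcount : ∀ w ∉ ⋃ j, ball (c j) (2 * r (m j)), ∀ p, 1 ≤ p → #{k | ‖w - z k‖ < r p} < p :=
    fun w hw => by
      simp only [mem_iUnion, mem_ball, not_exists, not_lt] at hw
      simpa only [dist_eq_norm] using hfar w hw
  have hl : 1 ≤ l := by
    refine Nat.one_le_iff_ne_zero.2 fun hl0 => ?_
    subst hl0
    refine (hcount (z ⟨0, hn⟩) (by simp) 1 le_rfl).not_ge (Finset.card_pos.2 ⟨⟨0, hn⟩, ?_⟩)
    simpa using hr_pos 1 le_rfl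
  refine ⟨l, hl, ?_, c, fun j => 2 * r (m j), fun j => mul_pos two_pos (hr_pos _ (hm j)), ?_,
    fun w hw => ?_⟩
  · simpa using (Finset.card_nsmul_le_sum _ _ 1 fun j _ => hm j).trans hmn
  · exact sum_sq_two_mul_mul_sqrt_div_le m hmn
  · exact (sum_one_div_le_of_card_lt _ r hr_pos (hcount w hw)).trans
      (sum_range_one_div_mul_sqrt_div_le hH)
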